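/- In the Theorem 2 construction, let B_0 = C_0 and B_n = ⋃_{i=1}^{(2^{k_n-k_{n-1}}-1) h(C_{n-1})} L_i where C_n = (L_1,...,L_{h_n}) (i.e., B_n is all but the top copy of C_{n-1} inside C_n together with none of the new A_n part). Then λ(⋂_{i=0}^n B_i) = λ(B_0) · ∏_{i=1}^n (1 - 2^{-(k_i - k_{i-1})}), and if k_i - k_{i-1} ≥ i for all i, then λ(⋂_{i=0}^∞ B_i) > 0. -/

import Mathlib

open MeasureTheory ENNReal

/-- A column: an ordered tuple of `h` half-open intervals of common width `w`,
with left endpoints `a i`; level `i` is `(a i, a i + w]`. -/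
structure Column where
  h : ℕ
  w : ℝ
  a : Fin h → ℝ

namespace Column

/-- Level `i` of the column. -/
def level (C : Column) (i : Fin C.h) : Set ℝ := Set.Ioc (C.a i) (C.a i + C.w)

/-- The support of a column: the union of its levels. -/
def support (C : Column) : Set ℝ := ⋃ i, C.level i

/-- Concatenation `C * C'` of two columns (of equal width): stack `C'` on top of `C`. -/
def concat (C C' : Column) : Column := ⟨C.h + C'.h, C.w, Fin.append C.a C'.a⟩

/-- One step of cutting and stacking: `C * C = C_L * C_R`, cutting each level in half. -/
noncomputable def cutStack (C : Column) : Column :=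
  ⟨C.h + C.h, C.w / 2, Fin.append C.a (fun i => C.a i + C.w / 2)⟩

/-- `C.iter k` is `C(k)`: `k` iterations of cutting and stacking. -/
noncomputable def iter (C : Column) : ℕ → Column
  | 0 => C
  | n + 1 => (C.iter n).cutStack

/-- The levels of a column are pairwise disjoint. -/
def LevelsDisjoint (C : Column) : Prop :=
  ∀ i j : Fin C.h, i ≠ j → Disjoint (C.level i) (C.level j)

end Column

/-- The initial column `C_0`, the single interval `X^1 = (1/2, 1]`. -/
noncomputable def baseCol : Column := ⟨1, 1 / 2, fun _ => 1 / 2⟩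

/-- The column of height one given by `A_n = (2^{-(n+1)}, 2^{-n}]`. -/
noncomputable def colA (n : ℕ) : Column := ⟨1, (2 : ℝ) ^ (-(n + 1 : ℤ)), fun _ => (2 : ℝ) ^ (-(n + 1 : ℤ))⟩

/-- The columns `C_n = C_{n-1}(k_n - k_{n-1}) * A_n(k_n - (n+1))` of the Theorem 2
construction. -/
noncomputable def cols (k : ℕ → ℕ) : ℕ → Column
  | 0 => baseCol
  | n + 1 => ((cols k n).iter (k (n + 1) - k n)).concat ((colA (n + 1)).iter (k (n + 1) - (n + 2)))

/-- `B_0 = C_0` (the support of the base column), and `B_n` is the union of all levels of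
`C_n` except the top copy of `C_{n-1}` and the newly added part `A_n(k_n - (n+1))`,
i.e. the first `(2^{k_n - k_{n-1}} - 1)·h(C_{n-1})` levels of `C_n`. -/
noncomputable def Bset (k : ℕ → ℕ) : ℕ → Set ℝ
  | 0 => baseCol.support
  | n + 1 => ⋃ i ∈ {i : Fin (cols k (n + 1)).h |
      i.1 < (2 ^ (k (n + 1) - k n) - 1) * (cols k n).h}, (cols k (n + 1)).level i

/-!
Within `C_{n+1}` the first `2^m h(C_n)` levels (`m = k_{n+1} - k_n`) form `2^m` stacked copies of
`C_n`, level `j` lying inside level `j mod h(C_n)` of `C_n`. By induction, `⋂_{i ≤ n} B_i` is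
therefore a union of levels of `C_n`, and passing to `n + 1` keeps from each of them the pieces in
the lowest `2^m - 1` copies, i.e. the fraction `1 - 2^{-m}` of its measure. When `m_i ≥ i` these
factors multiply to at least `1/4`, and continuity from above gives the positive measure.
-/

open Finset

namespace Column

variable (C D : Column)

def levelUnion (S : Set ℕ) : Set ℝ := ⋃ i ∈ {i : Fin C.h | (i : ℕ) ∈ S}, C.level i

lemma levelUnion_congr {S T : Set ℕ} (h : ∀ i : Fin C.h, (i : ℕ) ∈ S ↔ (i : ℕ) ∈ T) :
    C.levelUnion S = C.levelUnion T := by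
  simp only [levelUnion, Set.mem_ofPred_eq, h]

lemma support_eq_levelUnion_univ : C.support = C.levelUnion Set.univ := by
  simp [support, levelUnion]

lemma measurableSet_support : MeasurableSet C.support :=
  .iUnion fun _ => measurableSet_Ioc

lemma measurableSet_levelUnion (S : Set ℕ) : MeasurableSet (C.levelUnion S) :=
  .iUnion fun _ => .iUnion fun _ => measurableSet_Ioc

lemma levelUnion_inter (hC : C.LevelsDisjoint) (S T : Set ℕ) :
    C.levelUnion S ∩ C.levelUnion T = C.levelUnion (S ∩ T) := by
  ext x
  simp only [levelUnion, Set.mem_inter_iff, Set.mem_iUnion, Set.mem_ofPred_eq, exists_prop]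
  constructor
  · rintro ⟨⟨i, hiS, hxi⟩, j, hjT, hxj⟩
    obtain rfl : i = j := by_contra fun hij => (hC i j hij).le_bot ⟨hxi, hxj⟩
    exact ⟨i, ⟨hiS, hjT⟩, hxi⟩
  · rintro ⟨i, ⟨hiS, hiT⟩, hx⟩
    exact ⟨⟨i, hiS, hx⟩, i, hiT, hx⟩

lemma volume_level (i : Fin C.h) : volume (C.level i) = ENNReal.ofReal C.w := by
  rw [level, Real.volume_Ioc, add_sub_cancel_left]

lemma volume_levelUnion (hC : C.LevelsDisjoint) (V : Finset ℕ) (hV : V ⊆ range C.h) :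
    volume (C.levelUnion V) = #V * ENNReal.ofReal C.w := by
  classical
  have hunion :
      C.levelUnion V = ⋃ i ∈ univ.filter fun i : Fin C.h => (i : ℕ) ∈ V, C.level i := by
    simp [levelUnion]
  have hcard : #(univ.filter fun i : Fin C.h => (i : ℕ) ∈ V) = #V :=
    card_bij (fun i _ => i) (by simp) (fun _ _ _ _ => Fin.ext)
      fun j hj => ⟨⟨j, mem_range.mp (hV hj)⟩, by simpa using hj, rfl⟩
  rw [hunion, measure_biUnion_finset (fun i _ j _ hij => hC i j hij) fun i _ => measurableSet_Ioc]
  simp only [volume_level, sum_const, nsmul_eq_mul, hcard]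

lemma level_cutStack_castAdd (i : Fin C.h) :
    C.cutStack.level (Fin.castAdd C.h i) = Set.Ioc (C.a i) (C.a i + C.w / 2) := by
  simp only [level, cutStack, Fin.append_left]

lemma level_cutStack_natAdd (i : Fin C.h) :
    C.cutStack.level (Fin.natAdd C.h i) = Set.Ioc (C.a i + C.w / 2) (C.a i + C.w) := by
  simp only [level, cutStack, Fin.append_right]
  ring_nf

lemma level_eq_union_cutStack (hw : 0 ≤ C.w) (i : Fin C.h) :
    C.level i = C.cutStack.level (Fin.castAdd C.h i) ∪ C.cutStack.level (Fin.natAdd C.h i) := by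
  rw [level_cutStack_castAdd, level_cutStack_natAdd,
    Set.Ioc_union_Ioc_eq_Ioc (by linarith) (by linarith), level]

lemma LevelsDisjoint.cutStack (hw : 0 ≤ C.w) (hC : C.LevelsDisjoint) :
    C.cutStack.LevelsDisjoint := by
  have hl (i : Fin C.h) : C.cutStack.level (Fin.castAdd C.h i) ⊆ C.level i :=
    (C.level_eq_union_cutStack hw i).symm ▸ Set.subset_union_left
  have hr (i : Fin C.h) : C.cutStack.level (Fin.natAdd C.h i) ⊆ C.level i :=
    (C.level_eq_union_cutStack hw i).symm ▸ Set.subset_union_right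
  have halves (i : Fin C.h) :
      Disjoint (C.cutStack.level (Fin.castAdd C.h i)) (C.cutStack.level (Fin.natAdd C.h i)) := by
    rw [level_cutStack_castAdd, level_cutStack_natAdd]
    exact Set.Ioc_disjoint_Ioc_of_le le_rfl
  intro p q hpq
  change Fin (C.h + C.h) at p q
  induction p using Fin.addCases with
  | left i =>
    induction q using Fin.addCases with
    | left j => exact (hC i j (by rintro rfl; exact hpq rfl)).mono (hl i) (hl j)
    | right j =>
      obtain rfl | hij := eq_or_ne i j
      · exact halves i
      · exact (hC i j hij).mono (hl i) (hr j)
  | right i =>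
    induction q using Fin.addCases with
    | left j =>
      obtain rfl | hij := eq_or_ne j i
      · exact (halves j).symm
      · exact (hC i j hij.symm).mono (hr i) (hl j)
    | right j => exact (hC i j (by rintro rfl; exact hpq rfl)).mono (hr i) (hr j)

lemma iter_h (m : ℕ) : (C.iter m).h = 2 ^ m * C.h := by
  induction m with
  | zero => simp [iter]
  | succ m ih => simp only [iter, cutStack, ih]; ring

lemma iter_w (m : ℕ) : (C.iter m).w = C.w / 2 ^ m := by
  induction m with
  | zero => simp [iter]
  | succ m ih => simp only [iter, cutStack, ih]; ring

lemma LevelsDisjoint.iter (hw : 0 ≤ C.w) (hC : C.LevelsDisjoint) (m : ℕ) :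
    (C.iter m).LevelsDisjoint := by
  induction m with
  | zero => exact hC
  | succ m ih => exact ih.cutStack _ (by rw [iter_w]; positivity)

lemma levelUnion_cutStack_mod {d : ℕ} (hd : d ∣ C.h) (hw : 0 ≤ C.w) (T : Set ℕ) :
    C.cutStack.levelUnion {j | j % d ∈ T} = C.levelUnion {j | j % d ∈ T} := by
  ext x
  simp only [levelUnion, Set.mem_iUnion, Set.mem_ofPred_eq, exists_prop]
  constructor
  · rintro ⟨p, hp, hx⟩
    change Fin (C.h + C.h) at p
    induction p using Fin.addCases with
    | left i => exact ⟨i, hp, (C.level_eq_union_cutStack hw i).symm ▸ Or.inl hx⟩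
    | right i =>
      refine ⟨i, ?_, (C.level_eq_union_cutStack hw i).symm ▸ Or.inr hx⟩
      simpa [Nat.add_mod, Nat.mod_eq_zero_of_dvd hd] using hp
  · rintro ⟨i, hi, hx⟩
    rcases (C.level_eq_union_cutStack hw i) ▸ hx with hx | hx
    · exact ⟨Fin.castAdd C.h i, hi, hx⟩
    · exact ⟨Fin.natAdd C.h i, by simpa [Nat.add_mod, Nat.mod_eq_zero_of_dvd hd] using hi, hx⟩

lemma levelUnion_iter_mod (hw : 0 ≤ C.w) (T : Set ℕ) (m : ℕ) :
    (C.iter m).levelUnion {j | j % C.h ∈ T} = C.levelUnion {j | j % C.h ∈ T} := by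
  induction m with
  | zero => rfl
  | succ m ih =>
    refine ((C.iter m).levelUnion_cutStack_mod ?_ ?_ T).trans ih
    · exact ⟨2 ^ m, by rw [iter_h, mul_comm]⟩
    · rw [iter_w]; positivity

lemma support_iter (hw : 0 ≤ C.w) (m : ℕ) : (C.iter m).support = C.support := by
  simpa only [support_eq_levelUnion_univ, Set.mem_univ, Set.ofPred_true]
    using C.levelUnion_iter_mod hw Set.univ m

lemma level_concat_castAdd (i : Fin C.h) : (C.concat D).level (Fin.castAdd D.h i) = C.level i := by
  simp only [level, concat, Fin.append_left]

lemma level_concat_natAdd (hw : C.w = D.w) (j : Fin D.h) :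
    (C.concat D).level (Fin.natAdd C.h j) = D.level j := by
  simp only [level, concat, Fin.append_right, hw]

lemma support_concat (hw : C.w = D.w) : (C.concat D).support = C.support ∪ D.support := by
  ext x
  simp only [support, Set.mem_union, Set.mem_iUnion]
  constructor
  · rintro ⟨p, hx⟩
    change Fin (C.h + D.h) at p
    induction p using Fin.addCases with
    | left i => exact .inl ⟨i, C.level_concat_castAdd D i ▸ hx⟩
    | right j => exact .inr ⟨j, C.level_concat_natAdd D hw j ▸ hx⟩
  · rintro (⟨i, hx⟩ | ⟨j, hx⟩)
    · exact ⟨Fin.castAdd D.h i, (C.level_concat_castAdd D i).symm ▸ hx⟩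
    · exact ⟨Fin.natAdd C.h j, (C.level_concat_natAdd D hw j).symm ▸ hx⟩

lemma LevelsDisjoint.concat (hw : C.w = D.w) (hC : C.LevelsDisjoint) (hD : D.LevelsDisjoint)
    (hCD : Disjoint C.support D.support) : (C.concat D).LevelsDisjoint := by
  have hcross (i : Fin C.h) (j : Fin D.h) : Disjoint (C.level i) (D.level j) :=
    hCD.mono (Set.subset_iUnion _ i) (Set.subset_iUnion _ j)
  intro p q hpq
  change Fin (C.h + D.h) at p q
  induction p using Fin.addCases with
  | left i =>
    induction q using Fin.addCases with
    | left j =>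
      simpa only [level_concat_castAdd] using hC i j (by rintro rfl; exact hpq rfl)
    | right j => simpa only [level_concat_castAdd, level_concat_natAdd _ _ hw] using hcross i j
  | right i =>
    induction q using Fin.addCases with
    | left j =>
      simpa only [level_concat_castAdd, level_concat_natAdd _ _ hw] using (hcross j i).symm
    | right j =>
      simpa only [level_concat_natAdd _ _ hw] using hD i j (by rintro rfl; exact hpq rfl)

lemma levelUnion_concat_inter_Iio (S : Set ℕ) :
    (C.concat D).levelUnion (S ∩ Set.Iio C.h) = C.levelUnion S := by
  ext x
  simp only [levelUnion, Set.mem_iUnion, Set.mem_ofPred_eq, Set.mem_inter_iff, Set.mem_Iio,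
    exists_prop]
  constructor
  · rintro ⟨p, ⟨hpS, hp⟩, hx⟩
    refine ⟨⟨p, hp⟩, hpS, ?_⟩
    rwa [← C.level_concat_castAdd D]
  · rintro ⟨i, hiS, hx⟩
    exact ⟨Fin.castAdd D.h i, ⟨hiS, i.isLt⟩, (C.level_concat_castAdd D i).symm ▸ hx⟩

end Column

lemma card_filter_mod_mem_range_mul (a h : ℕ) (V : Finset ℕ) (hV : V ⊆ range h) :
    #((range (a * h)).filter (· % h ∈ V)) = a * #V := by
  rw [show a * #V = #(range a ×ˢ V) by simp]
  refine card_nbij' (fun j => (j / h, j % h)) (fun p => p.1 * h + p.2) ?_ ?_ ?_ ?_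
  · intro j hj
    simp only [coe_filter, mem_range, Set.mem_ofPred_eq] at hj
    have hh : 0 < h := Nat.pos_of_ne_zero (by rintro rfl; simp at hj)
    simpa [Nat.div_lt_iff_lt_mul hh] using hj
  · rintro ⟨q, r⟩ hqr
    simp only [coe_product, coe_range, Set.mem_prod, Set.mem_Iio, mem_coe] at hqr
    have hr : r < h := mem_range.mp (hV hqr.2)
    simp only [coe_filter, mem_range, Set.mem_ofPred_eq, Nat.mul_add_mod', Nat.mod_eq_of_lt hr]
    refine ⟨?_, hqr.2⟩
    nlinarith [hqr.1]
  · intro j _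
    exact Nat.div_add_mod' j h
  · rintro ⟨q, r⟩ hqr
    simp only [coe_product, coe_range, Set.mem_prod, Set.mem_Iio, mem_coe] at hqr
    have hr : r < h := mem_range.mp (hV hqr.2)
    have hh : 0 < h := by omega
    simp only [Nat.mul_add_mod', Nat.mod_eq_of_lt hr, Prod.mk.injEq, and_true]
    rw [add_comm, Nat.add_mul_div_right _ _ hh, Nat.div_eq_of_lt hr, zero_add]

lemma two_zpow_neg_div_two_pow {a b : ℕ} (hab : a ≤ b) :
    (2 : ℝ) ^ (-(a : ℤ)) / 2 ^ (b - a) = 2 ^ (-(b : ℤ)) := by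
  rw [← zpow_natCast, ← zpow_sub₀ two_ne_zero]
  congr 1
  omega

lemma baseCol_support : baseCol.support = Set.Ioc (1 / 2) 1 := by
  simp only [Column.support, Column.level, baseCol, Set.iUnion_const]
  norm_num

lemma colA_w (n : ℕ) : (colA n).w = 2 ^ (-((n + 1 : ℕ) : ℤ)) := by
  simp [colA]

lemma colA_support (n : ℕ) :
    (colA n).support = Set.Ioc (2 ^ (-((n + 1 : ℕ) : ℤ))) (2 ^ (-(n : ℤ))) := by
  have hdouble :
      (2 : ℝ) ^ (-((n + 1 : ℕ) : ℤ)) + 2 ^ (-((n + 1 : ℕ) : ℤ)) = 2 ^ (-(n : ℤ)) := by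
    rw [← two_mul, ← zpow_one_add₀ two_ne_zero]
    push_cast
    ring_nf
  simp only [colA, Column.support, Column.level, Set.iUnion_const]
  rw [← hdouble]
  push_cast
  rfl

lemma colA_levelsDisjoint (n : ℕ) : (colA n).LevelsDisjoint :=
  fun i j hij => absurd (Subsingleton.elim (α := Fin 1) i j) hij

section Construction

variable (k : ℕ → ℕ) (hk : StrictMono k) (hk0 : k 0 = 1)

include hk hk0

lemma succ_le_of_strictMono (n : ℕ) : n + 1 ≤ k n := by
  induction n with
  | zero => omega
  | succ n ih => have := hk (lt_add_one n); omega

lemma cols_w (n : ℕ) : (cols k n).w = 2 ^ (-(k n : ℤ)) := by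
  induction n with
  | zero => simp [cols, baseCol, hk0]
  | succ n ih =>
    change ((cols k n).iter _).w = _
    rw [Column.iter_w, ih, two_zpow_neg_div_two_pow (hk (lt_add_one n)).le]

lemma colA_iter_w (n : ℕ) :
    ((colA (n + 1)).iter (k (n + 1) - (n + 2))).w = 2 ^ (-(k (n + 1) : ℤ)) := by
  rw [Column.iter_w, colA_w, two_zpow_neg_div_two_pow (succ_le_of_strictMono k hk hk0 (n + 1))]

lemma cols_w_nonneg (n : ℕ) : 0 ≤ (cols k n).w := by
  rw [cols_w k hk hk0]
  positivity

lemma cols_iter_w_eq_colA_iter_w (n : ℕ) :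
    ((cols k n).iter (k (n + 1) - k n)).w = ((colA (n + 1)).iter (k (n + 1) - (n + 2))).w :=
  (cols_w k hk hk0 (n + 1)).trans (colA_iter_w k hk hk0 n).symm

lemma cols_support (n : ℕ) : (cols k n).support = Set.Ioc (2 ^ (-((n + 1 : ℕ) : ℤ))) 1 := by
  induction n with
  | zero => simpa [cols] using baseCol_support
  | succ n ih =>
    change (Column.concat _ _).support = _
    rw [Column.support_concat _ _ (cols_iter_w_eq_colA_iter_w k hk hk0 n),
      Column.support_iter _ (cols_w_nonneg k hk hk0 n),
      Column.support_iter _ (by rw [colA_w]; positivity), ih, colA_support, Set.union_comm,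
      Set.Ioc_union_Ioc_eq_Ioc (zpow_le_zpow_right₀ one_le_two (by omega))
        (zpow_le_one_of_nonpos₀ one_le_two (by omega))]

lemma cols_levelsDisjoint (n : ℕ) : (cols k n).LevelsDisjoint := by
  induction n with
  | zero => exact fun i j hij => absurd (Subsingleton.elim (α := Fin 1) i j) hij
  | succ n ih =>
    have hw := cols_w_nonneg k hk hk0 n
    have hwA : 0 ≤ (colA (n + 1)).w := by rw [colA_w]; positivity
    refine Column.LevelsDisjoint.concat _ _ (cols_iter_w_eq_colA_iter_w k hk hk0 n)
      (ih.iter _ hw _) ((colA_levelsDisjoint _).iter _ hwA _) ?_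
    rw [Column.support_iter _ hw, Column.support_iter _ hwA, cols_support k hk hk0, colA_support]
    exact (Set.Ioc_disjoint_Ioc_of_le le_rfl).symm

end Construction

noncomputable def keptLevels (k : ℕ → ℕ) : ℕ → Finset ℕ
  | 0 => {0}
  | n + 1 => (range ((2 ^ (k (n + 1) - k n) - 1) * (cols k n).h)).filter
      (· % (cols k n).h ∈ keptLevels k n)

lemma keptLevels_subset_range (k : ℕ → ℕ) (n : ℕ) :
    keptLevels k n ⊆ range (cols k n).h := by
  cases n with
  | zero => simp [keptLevels, cols, baseCol]
  | succ n =>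
    refine (filter_subset _ _).trans (range_subset_range.mpr ?_)
    change _ ≤ ((cols k n).iter _).h + _
    rw [Column.iter_h]
    exact (Nat.mul_le_mul_right _ (Nat.sub_le _ 1)).trans (Nat.le_add_right _ _)

lemma card_keptLevels_succ (k : ℕ → ℕ) (n : ℕ) :
    #(keptLevels k (n + 1)) = (2 ^ (k (n + 1) - k n) - 1) * #(keptLevels k n) :=
  card_filter_mod_mem_range_mul _ _ _ (keptLevels_subset_range k n)

lemma natCast_two_pow_sub_one_mul_inv_two_pow (m : ℕ) :
    ((2 ^ m - 1 : ℕ) : ℝ≥0∞) * 2⁻¹ ^ m = 1 - 2⁻¹ ^ m := by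
  have hne : (2 : ℝ≥0∞) ^ m ≠ 0 := pow_ne_zero m two_ne_zero
  have hcast : ((2 ^ m - 1 : ℕ) : ℝ≥0∞) = 2 ^ m - 1 := by
    push_cast [Nat.cast_sub Nat.one_le_two_pow]
    rfl
  rw [hcast, ← ENNReal.inv_pow,
    ENNReal.sub_mul fun _ _ => ENNReal.inv_ne_top.mpr hne,
    ENNReal.mul_inv_cancel hne (ENNReal.pow_ne_top ofNat_ne_top), one_mul]

lemma ofReal_div_two_pow (x : ℝ) (m : ℕ) :
    ENNReal.ofReal (x / 2 ^ m) = ENNReal.ofReal x * 2⁻¹ ^ m := by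
  rw [ENNReal.ofReal_div_of_pos (by positivity), ENNReal.ofReal_pow zero_le_two,
    ENNReal.ofReal_ofNat, div_eq_mul_inv, ENNReal.inv_pow]

lemma measurableSet_Bset (k : ℕ → ℕ) (n : ℕ) : MeasurableSet (Bset k n) := by
  cases n with
  | zero => exact baseCol.measurableSet_support
  | succ n => exact Column.measurableSet_levelUnion _ {j | j < _}

lemma volume_Bset_zero (k : ℕ → ℕ) : volume (Bset k 0) = ENNReal.ofReal (1 / 2) := by
  rw [Bset, baseCol_support, Real.volume_Ioc]
  norm_num

section Measure

variable (k : ℕ → ℕ) (hk : StrictMono k) (hk0 : k 0 = 1)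

include hk hk0

lemma biInter_Bset_eq_levelUnion (n : ℕ) :
    ⋂ i ∈ range (n + 1), Bset k i = (cols k n).levelUnion (keptLevels k n) := by
  induction n with
  | zero =>
    simp only [zero_add, range_one, Finset.set_biInter_singleton, Bset, keptLevels,
      Column.support_eq_levelUnion_univ]
    exact Column.levelUnion_congr _ fun i => by simpa using Nat.lt_one_iff.mp i.isLt
  | succ n ih =>
    set C := cols k n
    set m := k (n + 1) - k n
    have hw := cols_w_nonneg k hk hk0 n
    have hlift : C.levelUnion (keptLevels k n) = (cols k (n + 1)).levelUnion
        ({j | j % C.h ∈ keptLevels k n} ∩ Set.Iio (C.iter m).h) := calc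
      C.levelUnion (keptLevels k n) = C.levelUnion {j | j % C.h ∈ keptLevels k n} :=
        C.levelUnion_congr fun i => by simp [Nat.mod_eq_of_lt i.isLt]
      _ = (C.iter m).levelUnion {j | j % C.h ∈ keptLevels k n} :=
        (C.levelUnion_iter_mod hw _ m).symm
      _ = _ := (Column.levelUnion_concat_inter_Iio _ _ _).symm
    have hB : Bset k (n + 1) = (cols k (n + 1)).levelUnion {j | j < (2 ^ m - 1) * C.h} := rfl
    rw [range_add_one, set_biInter_insert, ih, hB, hlift,
      Column.levelUnion_inter _ (cols_levelsDisjoint k hk hk0 (n + 1))]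
    refine Column.levelUnion_congr _ fun i => ?_
    have hle : (2 ^ m - 1) * C.h ≤ 2 ^ m * C.h := Nat.mul_le_mul_right _ (Nat.sub_le _ 1)
    simp only [keptLevels, Set.mem_inter_iff, Set.mem_ofPred_eq, Set.mem_Iio, Column.iter_h,
      coe_filter, mem_range]
    constructor
    · rintro ⟨hi, hmod, -⟩
      exact ⟨hi, hmod⟩
    · rintro ⟨hi, hmod⟩
      exact ⟨hi, hmod, hi.trans_le hle⟩

lemma volume_biInter_Bset_eq_card_mul (n : ℕ) :
    volume (⋂ i ∈ range (n + 1), Bset k i)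
      = #(keptLevels k n) * ENNReal.ofReal (cols k n).w := by
  rw [biInter_Bset_eq_levelUnion k hk hk0, Column.volume_levelUnion _
    (cols_levelsDisjoint k hk hk0 n) _ (keptLevels_subset_range k n)]

lemma volume_biInter_Bset_succ (n : ℕ) :
    volume (⋂ i ∈ range (n + 2), Bset k i)
      = volume (⋂ i ∈ range (n + 1), Bset k i) * (1 - 2⁻¹ ^ (k (n + 1) - k n)) := by
  have hw : (cols k (n + 1)).w = (cols k n).w / 2 ^ (k (n + 1) - k n) := Column.iter_w _ _
  rw [volume_biInter_Bset_eq_card_mul k hk hk0, volume_biInter_Bset_eq_card_mul k hk hk0,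
    card_keptLevels_succ, hw, ofReal_div_two_pow, ← natCast_two_pow_sub_one_mul_inv_two_pow,
    Nat.cast_mul]
  ring

lemma volume_biInter_Bset (n : ℕ) :
    volume (⋂ i ∈ range (n + 1), Bset k i)
      = volume (Bset k 0) * ∏ i ∈ Icc 1 n, (1 - (2 : ℝ≥0∞)⁻¹ ^ (k i - k (i - 1))) := by
  induction n with
  | zero => simp
  | succ n ih =>
    rw [volume_biInter_Bset_succ k hk hk0, ih, prod_Icc_succ_top (Nat.le_add_left 1 n), mul_assoc,
      Nat.add_sub_cancel]

end Measure

lemma quarter_add_le_prod_one_sub_inv_two_pow (n : ℕ) :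
    1 / 4 + (2⁻¹ : ℝ) ^ (n + 1) ≤ ∏ i ∈ Icc 1 n, (1 - (2⁻¹ : ℝ) ^ i) := by
  induction n with
  | zero => norm_num
  | succ n ih =>
    rw [prod_Icc_succ_top (Nat.le_add_left 1 n)]
    rcases Nat.eq_zero_or_pos n with rfl | hn
    · norm_num
    have hx : (2⁻¹ : ℝ) ^ (n + 1) ≤ 1 / 4 := by
      calc (2⁻¹ : ℝ) ^ (n + 1) ≤ (2⁻¹ : ℝ) ^ 2 :=
            pow_le_pow_of_le_one (by norm_num) (by norm_num) (by omega)
        _ = 1 / 4 := by norm_num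
    have hx0 : (0 : ℝ) ≤ (2⁻¹ : ℝ) ^ (n + 1) := by positivity
    have hsucc : (2⁻¹ : ℝ) ^ (n + 2) = (2⁻¹ : ℝ) ^ (n + 1) * 2⁻¹ := pow_succ _ _
    -- `(1/4 + x) (1 - x) ≥ 1/4 + x/2` as soon as `x ≤ 1/4`
    nlinarith

lemma quarter_le_prod_one_sub_inv_two_pow {m : ℕ → ℕ} (hm : ∀ i, 1 ≤ i → i ≤ m i) (n : ℕ) :
    4⁻¹ ≤ ∏ i ∈ Icc 1 n, (1 - (2 : ℝ≥0∞)⁻¹ ^ m i) := by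
  have hreal : ∏ i ∈ Icc 1 n, (1 - (2 : ℝ≥0∞)⁻¹ ^ i)
      = ENNReal.ofReal (∏ i ∈ Icc 1 n, (1 - (2⁻¹ : ℝ) ^ i)) := by
    rw [ENNReal.ofReal_prod_of_nonneg fun i _ =>
      sub_nonneg.mpr (pow_le_one₀ (by norm_num) (by norm_num))]
    refine prod_congr rfl fun i _ => ?_
    rw [ENNReal.ofReal_sub _ (by positivity), ENNReal.ofReal_one, ENNReal.ofReal_pow (by norm_num),
      ENNReal.ofReal_inv_of_pos two_pos, ENNReal.ofReal_ofNat]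
  calc (4 : ℝ≥0∞)⁻¹ = ENNReal.ofReal (1 / 4) := by
        rw [one_div, ENNReal.ofReal_inv_of_pos (by norm_num), ENNReal.ofReal_ofNat]
    _ ≤ ∏ i ∈ Icc 1 n, (1 - (2 : ℝ≥0∞)⁻¹ ^ i) := by
      rw [hreal]
      exact ENNReal.ofReal_le_ofReal
        ((le_add_of_nonneg_right (by positivity)).trans (quarter_add_le_prod_one_sub_inv_two_pow n))
    _ ≤ ∏ i ∈ Icc 1 n, (1 - (2 : ℝ≥0∞)⁻¹ ^ m i) :=
      prod_le_prod' fun i hi => tsub_le_tsub_left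
        (pow_le_pow_right_of_le_one' (by norm_num) (hm i (mem_Icc.mp hi).1)) _

/-- `λ(⋂_{i=0}^n B_i) = λ(B_0) ∏_{i=1}^n (1 - 2^{-(k_i-k_{i-1})})`, and if
`k_i - k_{i-1} ≥ i` for all `i ≥ 1`, then `λ(⋂_{i=0}^∞ B_i) > 0`. -/
theorem Bset_measure (k : ℕ → ℕ) (hk : StrictMono k) (hk0 : k 0 = 1) :
    (∀ n : ℕ, volume (⋂ i ∈ Finset.range (n + 1), Bset k i)
      = volume (Bset k 0) * ∏ i ∈ Finset.Icc 1 n, (1 - (2 : ℝ≥0∞)⁻¹ ^ (k i - k (i - 1)))) ∧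
    ((∀ i : ℕ, 1 ≤ i → i ≤ k i - k (i - 1)) → 0 < volume (⋂ i : ℕ, Bset k i)) := by
  refine ⟨volume_biInter_Bset k hk hk0, fun hgap => ?_⟩
  have hB0 : volume (Bset k 0) = ENNReal.ofReal (1 / 2) := volume_Bset_zero k
  rw [measure_iInter_eq_iInf_measure_iInter_le (fun i => (measurableSet_Bset k i).nullMeasurableSet)
    ⟨0, hB0 ▸ ENNReal.ofReal_ne_top⟩]
  calc 0 < volume (Bset k 0) * 4⁻¹ := ENNReal.mul_pos (by simp [hB0]) (by norm_num)
    _ ≤ ⨅ n, volume (⋂ i ≤ n, Bset k i) := le_iInf fun n => by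
      have hrange : ⋂ i ≤ n, Bset k i = ⋂ i ∈ range (n + 1), Bset k i := by simp
      rw [hrange, volume_biInter_Bset k hk hk0]
      gcongr
      exact quarter_le_prod_one_sub_inv_two_pow hgap n
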